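/- Let ℓ: [0,1] × {0,1} → [−1,1] be any loss with Borel measurable sections ℓ(·,y) and let k_ℓ be a post-processing for ℓ. If a randomized predictor ((Ω,π), p) is randomized (G,∅,ε)-step calibrated, then for every group g ∈ G: |E_{ω~π,(x,y)~D}[(y − p(ω,x))·Δℓ(k_ℓ(p(ω,x))) | g(x)=1]| ≤ 10ε·√(1/P_g). -/

import Mathlib

open MeasureTheory ProbabilityTheory Set

noncomputable section

/-- Real value of a Boolean label. -/
def lab (y : Bool) : ℝ := if y then 1 else 0

/-- Conditional expectation of `f` under `D`, given that the group membership
function `g` evaluates to `true` on the context. -/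
def condE {X : Type*} [MeasurableSpace X] (D : Measure (X × Bool)) (g : X → Bool)
    (f : X × Bool → ℝ) : ℝ :=
  ∫ z, f z ∂(D[|{z : X × Bool | g z.1 = true}])

/-- Probability of group `g` under `D`. -/
def Pg {X : Type*} [MeasurableSpace X] (D : Measure (X × Bool)) (g : X → Bool) : ℝ :=
  (D {z : X × Bool | g z.1 = true}).toReal

/-- The set of all partition sums `∑ |f(z_{j+1}) - f(z_j)|` over finite partitions
`0 = z_0 < z_1 < ⋯ < z_m = 1` of `[0,1]`.  `V(f) ≤ C` iff every element is `≤ C`. -/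
def partitionSums (f : ℝ → ℝ) : Set ℝ :=
  {S | ∃ (m : ℕ) (z : ℕ → ℝ), z 0 = 0 ∧ z m = 1 ∧ (∀ i < m, z i < z (i + 1)) ∧
      S = ∑ i ∈ Finset.range m, |f (z (i + 1)) - f (z i)|}

/-- Joint conditional expectation for a randomized predictor: `F` is averaged over
`ω ~ π` drawn independently of `(x, y) ~ D`, conditioned on `g x = true`. -/
def condER {Ω X : Type*} [MeasurableSpace Ω] [MeasurableSpace X]
    (π : Measure Ω) (D : Measure (X × Bool)) (g : X → Bool)
    (F : Ω × (X × Bool) → ℝ) : ℝ :=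
  ∫ u, F u ∂((π.prod D)[|{u : Ω × (X × Bool) | g u.2.1 = true}])

/-! Optimality of the post-processing makes `φ q = Δℓ(k q)` non-increasing on `[0,1]`, so each
superlevel set `{q | t ≤ φ q}` is a threshold set `q ≤ a` or `q < a`, and step calibration bounds
the residual `y - p` on both kinds (on the strict ones by a monotone limit). The layer-cake formula
`φ q = φ 1 + ∫_{φ 1}^{φ 0} 1[t ≤ φ q] dt` and Fubini write `E[(y - p) φ(p)]` as `φ 1 · E[y - p]`
plus an integral of such threshold residuals over an interval of length `φ 0 - φ 1 ≤ 4`; hence the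
bound `(2 + 4) ε √(1/P_g)`. -/

open Filter

theorem IsLowerSet.eq_empty_or_eq_univ_or_eq_Iic_or_eq_Iio {β : Type*}
    [ConditionallyCompleteLinearOrder β] {s : Set β} (hs : IsLowerSet s) :
    s = ∅ ∨ s = univ ∨ ∃ c, s = Iic c ∨ s = Iio c := by
  rcases s.eq_empty_or_nonempty with h | hne
  · exact .inl h
  by_cases hbdd : BddAbove s
  · refine .inr (.inr ⟨sSup s, ?_⟩)
    by_cases hmem : sSup s ∈ s
    · exact .inl (subset_antisymm (fun x hx => le_csSup hbdd hx) fun x hx => hs hx hmem)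
    · refine .inr (subset_antisymm (fun x hx => (le_csSup hbdd hx).lt_of_ne ?_) fun x hx => ?_)
      · rintro rfl; exact hmem hx
      · obtain ⟨y, hy, hxy⟩ := exists_lt_of_lt_csSup hne hx
        exact hs hxy.le hy
  · refine .inr (.inl (eq_univ_of_forall fun x => ?_))
    obtain ⟨y, hy, hxy⟩ := not_bddAbove_iff.1 hbdd x
    exact hs hxy.le hy

section StepCalibration

variable {α : Type*} [MeasurableSpace α] {μ : Measure α} {r P : α → ℝ} {B : ℝ}

theorem integral_mul_eq_layercake [SFinite μ] (hr : Integrable r μ) {f : α → ℝ}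
    (hf : Measurable f) {lo hi : ℝ} (hf_mem : ∀ x, f x ∈ Icc lo hi) :
    ∫ x, r x * f x ∂μ = lo * ∫ x, r x ∂μ + ∫ t in Ioc lo hi, ∫ x in {x | t ≤ f x}, r x ∂μ := by
  set F : α → ℝ → ℝ := fun x t => (Iic (f x)).indicator (fun _ => r x) t
  have hF : Integrable (Function.uncurry F) (μ.prod (volume.restrict (Ioc lo hi))) :=
    (hr.comp_fst _).indicator (measurableSet_le measurable_snd (hf.comp measurable_fst))
  have hF' : Integrable (fun x => ∫ t in Ioc lo hi, F x t) μ := hF.integral_prod_left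
  have hsection : ∀ x, ∫ t in Ioc lo hi, F x t = (f x - lo) * r x := fun x => by
    rw [setIntegral_indicator measurableSet_Iic, setIntegral_const, Ioc_inter_Iic,
      min_eq_right (hf_mem x).2, Real.volume_real_Ioc_of_le (hf_mem x).1, smul_eq_mul]
  calc ∫ x, r x * f x ∂μ = ∫ x, (lo * r x + ∫ t in Ioc lo hi, F x t) ∂μ := by
        congr 1; funext x; rw [hsection]; ring
    _ = lo * ∫ x, r x ∂μ + ∫ x, (∫ t in Ioc lo hi, F x t) ∂μ := by
        rw [integral_add (hr.const_mul lo) hF', integral_const_mul]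
    _ = _ := by
        rw [integral_integral_swap hF]
        congr 2 with t
        rw [← integral_indicator (measurableSet_le measurable_const hf)]
        rfl

/-- `r` plays the role of the residual `y - p` and `P` of the prediction `p`. -/
def StepCalibrated (μ : Measure α) (r P : α → ℝ) (B : ℝ) : Prop :=
  ∀ v, |∫ x in P ⁻¹' Iic v, r x ∂μ| ≤ B

theorem integral_mul_ite_le_eq_setIntegral (hP : Measurable P) (v : ℝ) :
    ∫ x, r x * (if P x ≤ v then 1 else 0) ∂μ = ∫ x in P ⁻¹' Iic v, r x ∂μ := by
  rw [← integral_indicator (hP measurableSet_Iic)]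
  congr 1
  funext x
  by_cases hx : P x ≤ v <;> simp [hx]

theorem stepCalibrated_of_forall_mem_Icc {a b : ℝ} (hab : a ≤ b) (hP : ∀ x, P x ∈ Icc a b)
    (h : ∀ v ∈ Icc a b, |∫ x in P ⁻¹' Iic v, r x ∂μ| ≤ B) : StepCalibrated μ r P B := by
  intro v
  rcases lt_or_ge v a with hva | hav
  · have hempty : P ⁻¹' Iic v = ∅ :=
      eq_empty_of_forall_notMem fun x hx => ((hP x).1.trans hx).not_gt hva
    simpa [hempty] using (abs_nonneg _).trans (h a ⟨le_rfl, hab⟩)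
  rcases le_or_gt v b with hvb | hbv
  · exact h v ⟨hav, hvb⟩
  · have huniv : P ⁻¹' Iic v = P ⁻¹' Iic b := by
      ext x
      simp only [mem_preimage, mem_Iic, (hP x).2, ((hP x).2.trans hbv.le)]
    rw [huniv]
    exact h b ⟨hab, le_rfl⟩

namespace StepCalibrated

theorem nonneg (h : StepCalibrated μ r P B) : 0 ≤ B :=
  (abs_nonneg _).trans (h 0)

theorem abs_setIntegral_preimage_iUnion_le (h : StepCalibrated μ r P B)
    (hr : Integrable r μ) (hP : Measurable P) {v : ℕ → ℝ} (hv : Monotone v) :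
    |∫ x in P ⁻¹' ⋃ n, Iic (v n), r x ∂μ| ≤ B := by
  rw [preimage_iUnion]
  have hlim := tendsto_setIntegral_of_monotone (fun n => hP measurableSet_Iic)
    (fun m n hmn => preimage_mono (Iic_subset_Iic.2 (hv hmn))) hr.integrableOn
  exact le_of_tendsto' hlim.abs fun n => h (v n)

/-- Strict thresholds `P x < c` are monotone limits of thresholds `P x ≤ v`. -/
theorem abs_setIntegral_preimage_le (h : StepCalibrated μ r P B)
    (hr : Integrable r μ) (hP : Measurable P) {s : Set ℝ} (hs : IsLowerSet s) :
    |∫ x in P ⁻¹' s, r x ∂μ| ≤ B := by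
  rcases hs.eq_empty_or_eq_univ_or_eq_Iic_or_eq_Iio with rfl | rfl | ⟨c, rfl | rfl⟩
  · simpa using h.nonneg
  · rw [← iUnion_Iic_of_not_bddAbove_range (f := fun n : ℕ => (n : ℝ))
      (not_bddAbove_iff.2 fun x =>
        let ⟨n, hn⟩ := exists_nat_gt x; ⟨n, mem_range_self n, hn⟩)]
    exact h.abs_setIntegral_preimage_iUnion_le hr hP Nat.mono_cast
  · exact h c
  · have hlt : ∀ n : ℕ, c - 1 / ((n : ℝ) + 1) < c := fun n => sub_lt_self c Nat.one_div_pos_of_nat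
    have hlim : Tendsto (fun n : ℕ => c - 1 / ((n : ℝ) + 1)) atTop (nhds c) := by
      simpa only [sub_zero] using
        tendsto_const_nhds.sub (tendsto_one_div_add_atTop_nhds_zero_nat (𝕜 := ℝ))
    rw [← iUnion_Iic_eq_Iio_of_lt_of_tendsto hlt hlim]
    exact h.abs_setIntegral_preimage_iUnion_le hr hP fun m n hmn => by gcongr

theorem abs_integral_mul_comp_le_of_antitone [SFinite μ] (h : StepCalibrated μ r P B)
    (hr : Integrable r μ) (hP : Measurable P) {φ : ℝ → ℝ} (hφ : Antitone φ) {a b : ℝ}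
    (hab : a ≤ b) (hPab : ∀ x, P x ∈ Icc a b) :
    |∫ x, r x * φ (P x) ∂μ| ≤ (|φ b| + (φ a - φ b)) * B := by
  have hmem : ∀ x, φ (P x) ∈ Icc (φ b) (φ a) := fun x => ⟨hφ (hPab x).2, hφ (hPab x).1⟩
  have htotal : |∫ x, r x ∂μ| ≤ B := by
    simpa using h.abs_setIntegral_preimage_le hr hP isLowerSet_univ
  have hlevel : ∀ t, ‖∫ x in {x | t ≤ φ (P x)}, r x ∂μ‖ ≤ B := fun t =>
    h.abs_setIntegral_preimage_le hr hP (s := {q | t ≤ φ q}) fun _ _ hqq' hq' => hq'.trans (hφ hqq')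
  have hlayers : |∫ t in Ioc (φ b) (φ a), ∫ x in {x | t ≤ φ (P x)}, r x ∂μ| ≤ (φ a - φ b) * B := by
    have := norm_setIntegral_le_of_norm_le_const (μ := volume) (s := Ioc (φ b) (φ a))
      measure_Ioc_lt_top fun t _ => hlevel t
    rwa [Real.volume_real_Ioc_of_le (hφ hab), mul_comm] at this
  calc |∫ x, r x * φ (P x) ∂μ|
        = |φ b * ∫ x, r x ∂μ + ∫ t in Ioc (φ b) (φ a), ∫ x in {x | t ≤ φ (P x)}, r x ∂μ| := by
        rw [integral_mul_eq_layercake hr (f := fun x => φ (P x)) (hφ.measurable.comp hP) hmem]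
    _ ≤ |φ b| * |∫ x, r x ∂μ| + |∫ t in Ioc (φ b) (φ a), ∫ x in {x | t ≤ φ (P x)}, r x ∂μ| :=
        (abs_add_le _ _).trans_eq (by rw [abs_mul])
    _ ≤ |φ b| * B + (φ a - φ b) * B := by gcongr
    _ = _ := by ring

theorem abs_integral_mul_comp_le_of_antitoneOn [SFinite μ] (h : StepCalibrated μ r P B)
    (hr : Integrable r μ) (hP : Measurable P) {φ : ℝ → ℝ} {a b : ℝ} (hab : a ≤ b)
    (hφ : AntitoneOn φ (Icc a b)) (hPab : ∀ x, P x ∈ Icc a b) :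
    |∫ x, r x * φ (P x) ∂μ| ≤ (|φ b| + (φ a - φ b)) * B := by
  set ψ := IccExtend hab fun q : Icc a b => φ q
  have hψ : Antitone ψ := fun x y hxy =>
    hφ (projIcc a b hab x).2 (projIcc a b hab y).2 (monotone_projIcc hab hxy)
  have hψP : ∀ x, ψ (P x) = φ (P x) := fun x => IccExtend_of_mem hab _ (hPab x)
  simpa only [hψP, ψ, IccExtend_left, IccExtend_right] using
    h.abs_integral_mul_comp_le_of_antitone hr hP hψ hab hPab

end StepCalibrated

end StepCalibration

theorem antitoneOn_loss_sub_of_isMinOn {ℓ : ℝ → Bool → ℝ} {k : ℝ → ℝ} {s Y : Set ℝ}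
    (hk : MapsTo k s Y)
    (hopt : ∀ q ∈ s, IsMinOn (fun y => q * ℓ y true + (1 - q) * ℓ y false) Y (k q)) :
    AntitoneOn (fun q => ℓ (k q) true - ℓ (k q) false) s := by
  intro q₁ h₁ q₂ h₂ h₁₂
  have e₁ := isMinOn_iff.1 (hopt q₁ h₁) (k q₂) (hk h₂)
  have e₂ := isMinOn_iff.1 (hopt q₂ h₂) (k q₁) (hk h₁)
  rcases h₁₂.eq_or_lt with rfl | hlt
  · exact le_rfl
  · -- adding the two optimality inequalities gives `(q₂ - q₁) (Δ₂ - Δ₁) ≤ 0`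
    nlinarith

theorem abs_lab_sub_le_one (y : Bool) {q : ℝ} (hq : q ∈ Icc (0:ℝ) 1) : |lab y - q| ≤ 1 := by
  unfold lab
  split <;> exact abs_le.2 ⟨by linarith [hq.2], by linarith [hq.1]⟩

theorem stmt11_general {Ω X : Type*} [MeasurableSpace Ω] [MeasurableSpace X]
    (π : Measure Ω)
    (D : Measure (X × Bool))
    (ε : ℝ)
    -- an arbitrary loss with Borel measurable sections, bounded in [-1,1]
    (ℓ : ℝ → Bool → ℝ)
    (hLbdd : ∀ q ∈ Icc (0:ℝ) 1, ∀ y : Bool, ℓ q y ∈ Icc (-1:ℝ) 1)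
    -- a post-processing for ℓ
    (k : ℝ → ℝ)
    (hkrange : ∀ q ∈ Icc (0:ℝ) 1, k q ∈ Icc (0:ℝ) 1)
    (hkopt : ∀ q ∈ Icc (0:ℝ) 1, ∀ yhat ∈ Icc (0:ℝ) 1,
      q * ℓ (k q) true + (1 - q) * ℓ (k q) false ≤ q * ℓ yhat true + (1 - q) * ℓ yhat false)
    (G : Set (X → Bool))
    (p : Ω × X → ℝ) (hpmeas : Measurable p) (hprange : ∀ u, p u ∈ Icc (0:ℝ) 1)
    -- randomized (G, ∅, ε)-step calibration
    (hcal : ∀ v ∈ Icc (0:ℝ) 1, ∀ g ∈ G,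
      |condER π D g (fun u => (lab u.2.2 - p (u.1, u.2.1)) *
        (if p (u.1, u.2.1) ≤ v then 1 else 0))| ≤ ε * Real.sqrt (1 / Pg D g)) :
    ∀ g ∈ G,
      |condER π D g (fun u => (lab u.2.2 - p (u.1, u.2.1)) *
          (ℓ (k (p (u.1, u.2.1))) true - ℓ (k (p (u.1, u.2.1))) false))| ≤
        10 * ε * Real.sqrt (1 / Pg D g) := by
  intro g hg
  set μ := (π.prod D)[|{u : Ω × (X × Bool) | g u.2.1 = true}]
  set P : Ω × (X × Bool) → ℝ := fun u => p (u.1, u.2.1)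
  set Δ : ℝ → ℝ := fun q => ℓ (k q) true - ℓ (k q) false
  have hP : Measurable P := hpmeas.comp (measurable_fst.prodMk (measurable_fst.comp measurable_snd))
  have hr : Integrable (fun u => lab u.2.2 - P u) μ := by
    have hm : Measurable fun u : Ω × (X × Bool) => lab u.2.2 - P u :=
      ((Measurable.of_discrete (f := lab)).comp (measurable_snd.comp measurable_snd)).sub hP
    exact .of_bound hm.aestronglyMeasurable 1
      (ae_of_all _ fun u => abs_lab_sub_le_one u.2.2 (hprange (u.1, u.2.1)))
  have hstep : StepCalibrated μ (fun u => lab u.2.2 - P u) P (ε * √(1 / Pg D g)) :=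
    stepCalibrated_of_forall_mem_Icc zero_le_one (fun u => hprange _) fun v hv => by
      rw [← integral_mul_ite_le_eq_setIntegral hP]
      exact hcal v hv g hg
  have hΔ : AntitoneOn Δ (Icc 0 1) :=
    antitoneOn_loss_sub_of_isMinOn (fun q hq => hkrange q hq) fun q hq => isMinOn_iff.2 (hkopt q hq)
  have hbd : ∀ q ∈ Icc (0:ℝ) 1, |Δ q| ≤ 2 := fun q hq =>
    have hℓ := hLbdd (k q) (hkrange q hq)
    abs_sub_le_iff.2
      ⟨by linarith [(hℓ true).2, (hℓ false).1], by linarith [(hℓ true).1, (hℓ false).2]⟩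
  have hrange : |Δ 1| + (Δ 0 - Δ 1) ≤ 6 := by
    linarith [hbd 0 ⟨le_rfl, zero_le_one⟩, hbd 1 ⟨zero_le_one, le_rfl⟩, le_abs_self (Δ 0),
      neg_abs_le (Δ 1)]
  calc _ ≤ (|Δ 1| + (Δ 0 - Δ 1)) * (ε * √(1 / Pg D g)) :=
        hstep.abs_integral_mul_comp_le_of_antitoneOn hr hP zero_le_one hΔ fun u => hprange _
    _ ≤ 6 * (ε * √(1 / Pg D g)) := mul_le_mul_of_nonneg_right hrange hstep.nonneg
    _ ≤ 10 * ε * √(1 / Pg D g) := by linarith [hstep.nonneg]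

/-- **randomized Decision OI.** If a randomized predictor is randomized
`(G, ∅, ε)`-step calibrated, then for every group `g ∈ G`,
`|E[(y - p(ω,x))·Δℓ(k_ℓ(p(ω,x))) | g(x)=1]| ≤ 10ε·√(1/P_g)`. -/
theorem stmt11 {Ω X : Type*} [MeasurableSpace Ω] [MeasurableSpace X]
    (π : Measure Ω) [IsProbabilityMeasure π]
    (D : Measure (X × Bool)) [IsProbabilityMeasure D]
    (ε : ℝ) (hε : 0 < ε)
    -- an arbitrary loss with Borel measurable sections, bounded in [-1,1]
    (ℓ : ℝ → Bool → ℝ)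
    (hLmeas : ∀ y : Bool, Measurable (fun q => ℓ q y))
    (hLbdd : ∀ q ∈ Icc (0:ℝ) 1, ∀ y : Bool, ℓ q y ∈ Icc (-1:ℝ) 1)
    -- a post-processing for ℓ
    (k : ℝ → ℝ) (hkmeas : Measurable k)
    (hkrange : ∀ q ∈ Icc (0:ℝ) 1, k q ∈ Icc (0:ℝ) 1)
    (hkopt : ∀ q ∈ Icc (0:ℝ) 1, ∀ yhat ∈ Icc (0:ℝ) 1,
      q * ℓ (k q) true + (1 - q) * ℓ (k q) false ≤ q * ℓ yhat true + (1 - q) * ℓ yhat false)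
    (G : Set (X → Bool)) (hGmeas : ∀ g ∈ G, Measurable g)
    (hGpos : ∀ g ∈ G, 0 < Pg D g)
    (p : Ω × X → ℝ) (hpmeas : Measurable p) (hprange : ∀ u, p u ∈ Icc (0:ℝ) 1)
    -- randomized (G, ∅, ε)-step calibration
    (hcal : ∀ v ∈ Icc (0:ℝ) 1, ∀ g ∈ G,
      |condER π D g (fun u => (lab u.2.2 - p (u.1, u.2.1)) *
        (if p (u.1, u.2.1) ≤ v then 1 else 0))| ≤ ε * Real.sqrt (1 / Pg D g)) :
    ∀ g ∈ G,
      |condER π D g (fun u => (lab u.2.2 - p (u.1, u.2.1)) *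
          (ℓ (k (p (u.1, u.2.1))) true - ℓ (k (p (u.1, u.2.1))) false))| ≤
        10 * ε * Real.sqrt (1 / Pg D g) :=
  stmt11_general π D ε ℓ hLbdd k hkrange hkopt G p hpmeas hprange hcal

end
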